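/- arXiv:1705.07210 — 2 statements merged into one kernel-verified Lean document; each statement's English description precedes it below -/
import Mathlib

section
/- Gradient identity for the two-temperature loss: let 0 < t₁ < 2 and 0 < t₂ < 2. Then for every real u with 1 + (1-t₂)u > 0 (any u when t₂ = 1), the function u ↦ -log_{t₁}(exp_{t₂}(u)) is differentiable at u with derivative -(exp_{t₂}(u))^{t₂ - t₁}. In particular, when t₂ > t₁ the gradient of the loss of an observation carries the importance factor p^{t₂ - t₁} where p = exp_{t₂}(u) is its predictive probability. -/
/-- The tempered logarithm `log_t`: for `t ≠ 1` it is `(x^(1-t) - 1)/(1-t)`;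
for `t = 1` it is the natural logarithm. -/
noncomputable def tlog (t x : ℝ) : ℝ :=
  if t = 1 then Real.log x else (x ^ (1 - t) - 1) / (1 - t)

/-- The tempered exponential `exp_t`: for `t ≠ 1` it is
`(max 0 (1 + (1-t)u))^(1/(1-t))`; for `t = 1` it is the standard exponential. -/
noncomputable def texp (t u : ℝ) : ℝ :=
  if t = 1 then Real.exp u else (max 0 (1 + (1 - t) * u)) ^ (1 / (1 - t))

lemma texp_of_ne_one {t u : ℝ} (ht : t ≠ 1) (hu : 0 ≤ 1 + (1 - t) * u) :
    texp t u = (1 + (1 - t) * u) ^ (1 / (1 - t)) := by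
  rw [texp, if_neg ht, max_eq_right hu]

lemma texp_pos {t u : ℝ} (hu : 0 < 1 + (1 - t) * u) : 0 < texp t u := by
  unfold texp
  split
  · exact Real.exp_pos u
  · exact Real.rpow_pos_of_pos (lt_max_of_lt_right hu) _

lemma texp_hasDerivAt {t u : ℝ} (hu : 0 < 1 + (1 - t) * u) :
    HasDerivAt (texp t) (texp t u ^ t) u := by
  rcases eq_or_ne t 1 with rfl | ht
  · have hexp : texp 1 = Real.exp := funext fun v => if_pos rfl
    simpa [hexp] using Real.hasDerivAt_exp u
  have hsub : (1 : ℝ) - t ≠ 0 := sub_ne_zero.mpr ht.symm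
  have hbase : HasDerivAt (fun v : ℝ => 1 + (1 - t) * v) (1 - t) u := by
    simpa using ((hasDerivAt_id u).const_mul (1 - t)).const_add 1
  have hpow := (Real.hasDerivAt_rpow_const (p := 1 / (1 - t)) (Or.inl hu.ne')).comp u hbase
  have hlocal : (fun v => (1 + (1 - t) * v) ^ (1 / (1 - t))) =ᶠ[nhds u] texp t := by
    filter_upwards [hbase.continuousAt.eventually (eventually_gt_nhds hu)] with v hv
    exact (texp_of_ne_one ht hv.le).symm
  refine (hpow.congr_of_eventuallyEq hlocal.symm).congr_deriv ?_
  rw [texp_of_ne_one ht hu.le, ← Real.rpow_mul hu.le,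
    show 1 / (1 - t) * t = 1 / (1 - t) - 1 by field_simp; ring]
  field_simp

lemma tlog_hasDerivAt {t x : ℝ} (hx : 0 < x) : HasDerivAt (tlog t) (x ^ (-t)) x := by
  rcases eq_or_ne t 1 with rfl | ht
  · have hlog : tlog 1 = Real.log := funext fun y => if_pos rfl
    simpa [hlog, Real.rpow_neg_one] using Real.hasDerivAt_log hx.ne'
  have hsub : (1 : ℝ) - t ≠ 0 := sub_ne_zero.mpr ht.symm
  have htlog : tlog t = fun y => (y ^ (1 - t) - 1) / (1 - t) := funext fun y => if_neg ht
  rw [htlog]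
  refine (((Real.hasDerivAt_rpow_const (Or.inl hx.ne')).sub_const 1).div_const
    (1 - t)).congr_deriv ?_
  rw [show 1 - t - 1 = -t by ring]
  field_simp

theorem loss_hasDerivAt_general (t₁ t₂ : ℝ) (u : ℝ) (hu : 0 < 1 + (1 - t₂) * u) :
    HasDerivAt (fun v : ℝ => -tlog t₁ (texp t₂ v))
      (-(texp t₂ u) ^ (t₂ - t₁)) u := by
  have hp : 0 < texp t₂ u := texp_pos hu
  have hchain := ((tlog_hasDerivAt (t := t₁) hp).comp u (texp_hasDerivAt hu)).neg
  rwa [← Real.rpow_add hp, neg_add_eq_sub] at hchain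

/-- Gradient identity for the two-temperature loss: for `0 < t₁ < 2`,
`0 < t₂ < 2`, and any `u` with `1 + (1-t₂)u > 0` (which holds for every `u`
when `t₂ = 1`), the map `u ↦ -log_{t₁}(exp_{t₂} u)` is differentiable at `u`
with derivative `-(exp_{t₂} u)^(t₂ - t₁)`. -/
theorem loss_hasDerivAt (t₁ t₂ : ℝ) (ht₁0 : 0 < t₁) (ht₁2 : t₁ < 2)
    (ht₂0 : 0 < t₂) (ht₂2 : t₂ < 2) (u : ℝ) (hu : 0 < 1 + (1 - t₂) * u) :
    HasDerivAt (fun v : ℝ => -tlog t₁ (texp t₂ v))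
      (-(texp t₂ u) ^ (t₂ - t₁)) u :=
  loss_hasDerivAt_general t₁ t₂ u hu
end

section
/- Unique minimizer of the multiclass tempered cross-entropy and argmax preservation (core of Theorem 3): let 0 < t₁ < 2 and let p = (p_c)_{c=1}^C be a probability vector with all entries positive. Over all probability vectors q = (q_c)_{c=1}^C with positive entries, the function q ↦ -Σ_{c=1}^C p_c · log_{t₁}(q_c) attains its minimum at the unique point q* given by q*_c = p_c^{1/t₁} / Σ_{j=1}^C p_j^{1/t₁}. Moreover, for every class c, q*_c is maximal among the entries of q* if and only if p_c is maximal among the entries of p. -/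
/-!
`log_t` is strictly concave with derivative `x ^ (-t)`, so `∑ c, p c * log_t (q c)` is strictly
concave in `q`. On the simplex its maximiser is the point where the gradient `p c * q c ^ (-t)`
is constant in `c`, i.e. `q c ∝ p c ^ (1 / t)`; the tangent-plane inequality at that point,
summed with weights `p c`, gives the minimality and uniqueness. The argmax statement holds
because `x ↦ x ^ (1 / t)` is strictly increasing.
-/

open Finset Set

lemma hasDerivAt_tlog (t : ℝ) {x : ℝ} (hx : 0 < x) :
    HasDerivAt (tlog t) (x ^ (-t)) x := by
  by_cases ht : t = 1
  · have : tlog t = Real.log := funext fun y => by simp [tlog, ht]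
    rw [this, ht, Real.rpow_neg_one]
    exact Real.hasDerivAt_log hx.ne'
  · have ht' : 1 - t ≠ 0 := sub_ne_zero.mpr (Ne.symm ht)
    have : tlog t = fun y => (y ^ (1 - t) - 1) / (1 - t) := funext fun y => by simp [tlog, ht]
    rw [this]
    have := ((Real.hasDerivAt_rpow_const (p := 1 - t) (Or.inl hx.ne')).sub_const 1).div_const
      (1 - t)
    rwa [sub_sub_cancel_left, mul_div_cancel_left₀ _ ht'] at this

lemma strictConcaveOn_tlog {t : ℝ} (ht : 0 < t) : StrictConcaveOn ℝ (Ioi 0) (tlog t) := by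
  refine StrictAntiOn.strictConcaveOn_of_deriv (convex_Ioi 0)
    (fun x hx => (hasDerivAt_tlog t hx).continuousAt.continuousWithinAt) ?_
  rw [interior_Ioi]
  intro x hx y hy hxy
  rw [(hasDerivAt_tlog t hx).deriv, (hasDerivAt_tlog t hy).deriv]
  exact Real.rpow_lt_rpow_of_neg hx hxy (neg_neg_of_pos ht)

lemma StrictConcaveOn.lt_add_mul_sub_of_hasDerivAt {S : Set ℝ} {f : ℝ → ℝ} {f' x y : ℝ}
    (hf : StrictConcaveOn ℝ S f) (hx : x ∈ S) (hy : y ∈ S) (hxy : x ≠ y)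
    (hfy : HasDerivAt f f' y) : f x < f y + f' * (x - y) := by
  rcases hxy.lt_or_gt with hlt | hlt
  · have := hf.lt_slope_of_hasDerivAt hx hy hlt hfy
    rw [slope_def_field, lt_div_iff₀ (sub_pos.mpr hlt)] at this
    linarith
  · have := hf.slope_lt_of_hasDerivAt hy hx hlt hfy
    rw [slope_def_field, div_lt_iff₀ (sub_pos.mpr hlt)] at this
    linarith

/-- `μ` is the Lagrange multiplier of the constraint `∑ i, x i = ∑ i, y i`. -/
lemma StrictConcaveOn.sum_mul_lt_of_mul_deriv_eq {ι : Type*} [Fintype ι] {S : Set ℝ}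
    {f : ℝ → ℝ} (hf : StrictConcaveOn ℝ S f) {w x y d : ι → ℝ} {μ : ℝ} (hw : ∀ i, 0 < w i)
    (hx : ∀ i, x i ∈ S) (hy : ∀ i, y i ∈ S) (hd : ∀ i, HasDerivAt f (d i) (y i))
    (hwd : ∀ i, w i * d i = μ) (hsum : ∑ i, x i = ∑ i, y i) (hxy : x ≠ y) :
    ∑ i, w i * f (x i) < ∑ i, w i * f (y i) := by
  have tangent_lt : ∀ i, x i ≠ y i → w i * f (x i) < w i * f (y i) + μ * (x i - y i) := by
    intro i hi
    have := mul_lt_mul_of_pos_left (hf.lt_add_mul_sub_of_hasDerivAt (hx i) (hy i) hi (hd i))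
      (hw i)
    rw [← hwd i]
    linarith
  have tangent_le : ∀ i, w i * f (x i) ≤ w i * f (y i) + μ * (x i - y i) := by
    intro i
    rcases eq_or_ne (x i) (y i) with hi | hi
    · simp [hi]
    · exact (tangent_lt i hi).le
  obtain ⟨i, hi⟩ := Function.ne_iff.mp hxy
  calc ∑ i, w i * f (x i) < ∑ i, (w i * f (y i) + μ * (x i - y i)) :=
        sum_lt_sum (fun i _ => tangent_le i) ⟨i, mem_univ i, tangent_lt i hi⟩
    _ = ∑ i, w i * f (y i) := by
        rw [sum_add_distrib, ← mul_sum, sum_sub_distrib, hsum, sub_self, mul_zero, add_zero]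

section temperedArgmin

variable {ι : Type*} [Fintype ι]

noncomputable def temperedArgmin (t : ℝ) (p : ι → ℝ) (c : ι) : ℝ :=
  p c ^ (1 / t) / ∑ j, p j ^ (1 / t)

variable {t : ℝ} {p : ι → ℝ}

lemma sum_rpow_pos (hp : ∀ c, 0 < p c) (c : ι) : 0 < ∑ j, p j ^ (1 / t) :=
  (Real.rpow_pos_of_pos (hp c) _).trans_le <|
    single_le_sum (fun j _ => (Real.rpow_pos_of_pos (hp j) _).le) (mem_univ c)

lemma temperedArgmin_pos (hp : ∀ c, 0 < p c) (c : ι) : 0 < temperedArgmin t p c :=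
  div_pos (Real.rpow_pos_of_pos (hp c) _) (sum_rpow_pos hp c)

lemma sum_temperedArgmin [Nonempty ι] (hp : ∀ c, 0 < p c) : ∑ c, temperedArgmin t p c = 1 := by
  simp only [temperedArgmin]
  rw [← sum_div, div_self (sum_rpow_pos hp (Classical.arbitrary ι)).ne']

lemma mul_temperedArgmin_rpow_neg (ht : t ≠ 0) (hp : ∀ c, 0 < p c) (c : ι) :
    p c * temperedArgmin t p c ^ (-t) = (∑ j, p j ^ (1 / t)) ^ t := by
  have hZ := sum_rpow_pos (t := t) hp c
  rw [temperedArgmin, Real.div_rpow (Real.rpow_pos_of_pos (hp c) _).le hZ.le,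
    ← Real.rpow_mul (hp c).le, one_div_mul_eq_div, neg_div, div_self ht, Real.rpow_neg_one,
    Real.rpow_neg hZ.le, div_inv_eq_mul, ← mul_assoc, mul_inv_cancel₀ (hp c).ne', one_mul]

lemma sum_mul_tlog_lt_of_ne_temperedArgmin (ht : 0 < t) (hp : ∀ c, 0 < p c) {q : ι → ℝ}
    (hq : ∀ c, 0 < q c) (hq1 : ∑ c, q c = 1) (hne : q ≠ temperedArgmin t p) :
    ∑ c, p c * tlog t (q c) < ∑ c, p c * tlog t (temperedArgmin t p c) := by
  have : Nonempty ι := by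
    by_contra h
    rw [not_nonempty_iff] at h
    simp at hq1
  exact (strictConcaveOn_tlog ht).sum_mul_lt_of_mul_deriv_eq hp hq (temperedArgmin_pos hp)
    (fun c => hasDerivAt_tlog t (temperedArgmin_pos hp c)) (mul_temperedArgmin_rpow_neg ht.ne' hp)
    (hq1.trans (sum_temperedArgmin hp).symm) hne

lemma temperedArgmin_le_temperedArgmin_iff (ht : 0 < t) (hp : ∀ c, 0 < p c) (i j : ι) :
    temperedArgmin t p i ≤ temperedArgmin t p j ↔ p i ≤ p j := by
  rw [temperedArgmin, temperedArgmin, div_le_div_iff_of_pos_right (sum_rpow_pos hp i),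
    Real.rpow_le_rpow_iff (hp i).le (hp j).le (one_div_pos.mpr ht)]

end temperedArgmin

theorem multiclass_cross_entropy_minimizer_general (t₁ : ℝ) (ht0 : 0 < t₁)
    (C : ℕ) (p : Fin C → ℝ) (hp : ∀ c, 0 < p c) :
    (∀ q : Fin C → ℝ, (∀ c, 0 < q c) → ∑ c : Fin C, q c = 1 →
      -∑ c : Fin C, p c *
          tlog t₁ ((p c) ^ (1 / t₁) / ∑ j : Fin C, (p j) ^ (1 / t₁)) ≤
        -∑ c : Fin C, p c * tlog t₁ (q c)) ∧
    (∀ q : Fin C → ℝ, (∀ c, 0 < q c) → ∑ c : Fin C, q c = 1 →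
      (-∑ c : Fin C, p c * tlog t₁ (q c)) =
        (-∑ c : Fin C, p c *
          tlog t₁ ((p c) ^ (1 / t₁) / ∑ j : Fin C, (p j) ^ (1 / t₁))) →
      q = fun c => (p c) ^ (1 / t₁) / ∑ j : Fin C, (p j) ^ (1 / t₁)) ∧
    (∀ c : Fin C,
      (∀ j : Fin C, (p j) ^ (1 / t₁) / (∑ i : Fin C, (p i) ^ (1 / t₁)) ≤
        (p c) ^ (1 / t₁) / ∑ i : Fin C, (p i) ^ (1 / t₁)) ↔
      (∀ j : Fin C, p j ≤ p c)) := by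
  have strict_min := fun q hq hq1 hne =>
    sum_mul_tlog_lt_of_ne_temperedArgmin (q := q) ht0 hp hq hq1 hne
  refine ⟨fun q hq hq1 => ?_, fun q hq hq1 heq => ?_, fun c =>
    forall_congr' fun j => temperedArgmin_le_temperedArgmin_iff ht0 hp j c⟩
  · rcases eq_or_ne q (temperedArgmin t₁ p) with rfl | hne
    · rfl
    · exact neg_le_neg (strict_min q hq hq1 hne).le
  · by_contra hne
    exact (strict_min q hq hq1 hne).ne (neg_injective heq)

/-- Unique minimizer of the multiclass tempered cross-entropy and argmax
preservation: for `0 < t₁ < 2` and a strictly positive probability vector `p`,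
over strictly positive probability vectors `q` the map
`q ↦ -∑ c, p c * log_{t₁} (q c)` attains its minimum exactly at
`q* c = (p c)^(1/t₁) / ∑ j, (p j)^(1/t₁)`; moreover `q*` has the same maximal
entries as `p`. -/
theorem multiclass_cross_entropy_minimizer (t₁ : ℝ) (ht0 : 0 < t₁)
    (ht2 : t₁ < 2) (C : ℕ) (p : Fin C → ℝ) (hp : ∀ c, 0 < p c)
    (hps : ∑ c : Fin C, p c = 1) :
    (∀ q : Fin C → ℝ, (∀ c, 0 < q c) → ∑ c : Fin C, q c = 1 →
      -∑ c : Fin C, p c *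
          tlog t₁ ((p c) ^ (1 / t₁) / ∑ j : Fin C, (p j) ^ (1 / t₁)) ≤
        -∑ c : Fin C, p c * tlog t₁ (q c)) ∧
    (∀ q : Fin C → ℝ, (∀ c, 0 < q c) → ∑ c : Fin C, q c = 1 →
      (-∑ c : Fin C, p c * tlog t₁ (q c)) =
        (-∑ c : Fin C, p c *
          tlog t₁ ((p c) ^ (1 / t₁) / ∑ j : Fin C, (p j) ^ (1 / t₁))) →
      q = fun c => (p c) ^ (1 / t₁) / ∑ j : Fin C, (p j) ^ (1 / t₁)) ∧
    (∀ c : Fin C,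
      (∀ j : Fin C, (p j) ^ (1 / t₁) / (∑ i : Fin C, (p i) ^ (1 / t₁)) ≤
        (p c) ^ (1 / t₁) / ∑ i : Fin C, (p i) ^ (1 / t₁)) ↔
      (∀ j : Fin C, p j ≤ p c)) :=
  multiclass_cross_entropy_minimizer_general t₁ ht0 C p hp
end
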